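/- arXiv:1907.09031 — 3 statements merged into one kernel-verified Lean document; each statement's English description precedes it below -/
import Mathlib

section
/- Let R and S be rings and ρ : R → S a ring homomorphism, so that S is an (S,R)-bimodule via ρ. Let C be a non-negatively indexed chain complex of free left R-modules with H_0(C) = 0 and H_1(C) = 0. Then the base-changed chain complex S ⊗_R C of left S-modules satisfies H_0(S ⊗_R C) = 0 and H_1(S ⊗_R C) = 0. -/
open TensorProduct

/-- The base change `S ⊗_R C` of a left `R`-module `C` along a ring
homomorphism `ρ : R → S` (with `S` regarded as an `(S,R)`-bimodule via `ρ`),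
realised as the quotient of the left `S`-module `S ⊗_ℤ C` by the
`S`-submodule generated by the relations `(s·ρ(r)) ⊗ c − s ⊗ (r·c)`. -/
noncomputable def baseChangeRel {R S : Type} [Ring R] [Ring S] (ρ : R →+* S)
    (C : Type) [AddCommGroup C] [Module R C] : Submodule S (S ⊗[ℤ] C) :=
  Submodule.span S
    {x | ∃ (s : S) (r : R) (c : C), x = (s * ρ r) ⊗ₜ[ℤ] c - s ⊗ₜ[ℤ] (r • c)}

/-!
Base change along `ρ` is a right exact functor. Surjectivity of `id ⊗ ∂₁` is clear on pure
tensors. For exactness at `S ⊗_R C₁`, the projective module `C₀` gives a section `σ` of the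
surjection `∂₁`; then `x = (id ⊗ (1 - σ∂₁)) x + (id ⊗ σ)(id ⊗ ∂₁) x`, the second summand
vanishes when `x` is a cycle, and `1 - σ∂₁` takes values in `ker ∂₁ = im ∂₂`.
-/

namespace BaseChange

variable {R S : Type} [Ring R] [Ring S] (ρ : R →+* S)
variable {C C' C'' : Type} [AddCommGroup C] [Module R C] [AddCommGroup C'] [Module R C']
  [AddCommGroup C''] [Module R C'']

lemma baseChangeRel_le_comap_lTensor (f : C →ₗ[R] C') :
    baseChangeRel ρ C ≤
      (baseChangeRel ρ C').comap (AlgebraTensorModule.lTensor S S (f.restrictScalars ℤ)) := by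
  rw [baseChangeRel, Submodule.span_le]
  rintro x ⟨s, r, c, rfl⟩
  simp only [SetLike.mem_coe, Submodule.mem_comap, LinearMap.map_sub]
  exact Submodule.subset_span ⟨s, r, f c, by simp⟩

noncomputable def map (f : C →ₗ[R] C') :
    ((S ⊗[ℤ] C) ⧸ baseChangeRel ρ C) →ₗ[S] ((S ⊗[ℤ] C') ⧸ baseChangeRel ρ C') :=
  Submodule.mapQ _ _ _ (baseChangeRel_le_comap_lTensor ρ f)

@[simp]
lemma map_mk_tmul (f : C →ₗ[R] C') (s : S) (c : C) :
    map ρ f (Submodule.Quotient.mk (s ⊗ₜ[ℤ] c)) =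
      Submodule.Quotient.mk (s ⊗ₜ[ℤ] f c) :=
  rfl

@[ext]
lemma hom_ext {M : Type} [AddCommGroup M] [Module S M]
    {g h : ((S ⊗[ℤ] C) ⧸ baseChangeRel ρ C) →ₗ[S] M}
    (H : ∀ (s : S) (c : C), g (Submodule.Quotient.mk (s ⊗ₜ[ℤ] c)) =
      h (Submodule.Quotient.mk (s ⊗ₜ[ℤ] c))) : g = h :=
  Submodule.linearMap_qext _ (AlgebraTensorModule.ext H)

lemma map_id : map ρ (LinearMap.id : C →ₗ[R] C) = LinearMap.id := by
  ext; simp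

lemma map_comp (g : C' →ₗ[R] C'') (f : C →ₗ[R] C') :
    map ρ (g ∘ₗ f) = map ρ g ∘ₗ map ρ f := by
  ext; simp

lemma map_sub (f g : C →ₗ[R] C') : map ρ (f - g) = map ρ f - map ρ g := by
  ext; simp [tmul_sub]

lemma range_map_le_range_map {f : C'' →ₗ[R] C'} {g : C →ₗ[R] C'}
    (h : LinearMap.range f ≤ LinearMap.range g) :
    LinearMap.range (map ρ f) ≤ LinearMap.range (map ρ g) := by
  rintro _ ⟨q, rfl⟩
  obtain ⟨x, rfl⟩ := Submodule.Quotient.mk_surjective _ q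
  induction x using TensorProduct.induction_on with
  | zero => simp
  | tmul s c =>
    obtain ⟨c', hc'⟩ := h ⟨c, rfl⟩
    exact ⟨Submodule.Quotient.mk (s ⊗ₜ[ℤ] c'), by simp [hc']⟩
  | add x y hx hy =>
    rw [Submodule.Quotient.mk_add, LinearMap.map_add]
    exact add_mem hx hy

lemma map_surjective {f : C →ₗ[R] C'} (hf : Function.Surjective f) :
    Function.Surjective (map ρ f) := by
  have h := range_map_le_range_map ρ (f := LinearMap.id) (g := f)
    (by simp [LinearMap.range_eq_top.2 hf])
  rw [map_id, LinearMap.range_id, top_le_iff] at h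
  exact LinearMap.range_eq_top.1 h

lemma ker_map_le_range_map [Module.Projective R C] {f : C' →ₗ[R] C} {g : C'' →ₗ[R] C'}
    (hf : Function.Surjective f) (hfg : LinearMap.ker f ≤ LinearMap.range g) :
    LinearMap.ker (map ρ f) ≤ LinearMap.range (map ρ g) := by
  obtain ⟨σ, hσ⟩ := Module.projective_lifting_property f LinearMap.id hf
  have hσf : LinearMap.range (LinearMap.id - σ ∘ₗ f) ≤ LinearMap.range g := by
    refine le_trans ?_ hfg
    rintro _ ⟨c, rfl⟩
    simp [LinearMap.mem_ker, ← LinearMap.comp_apply f σ, hσ]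
  intro q hq
  have hsplit : q = map ρ (LinearMap.id - σ ∘ₗ f) q + map ρ σ (map ρ f q) := by
    simp [map_sub, map_comp, map_id]
  rw [hsplit, LinearMap.mem_ker.1 hq, LinearMap.map_zero, add_zero]
  exact range_map_le_range_map ρ hσf ⟨q, rfl⟩

end BaseChange

theorem statement4_general {R S : Type} [Ring R] [Ring S] (ρ : R →+* S)
    (C : ℕ → Type) [∀ n, AddCommGroup (C n)] [∀ n, Module R (C n)]
    [∀ n, Module.Free R (C n)]
    (d : ∀ n, C (n + 1) →ₗ[R] C n)
    (hH0 : Function.Surjective (d 0))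
    (hH1 : LinearMap.ker (d 0) ≤ LinearMap.range (d 1)) :
    ∃ D : ∀ n, ((S ⊗[ℤ] C (n + 1)) ⧸ baseChangeRel ρ (C (n + 1))) →ₗ[S]
        ((S ⊗[ℤ] C n) ⧸ baseChangeRel ρ (C n)),
      (∀ (n : ℕ) (s : S) (c : C (n + 1)),
          D n (Submodule.Quotient.mk (s ⊗ₜ[ℤ] c)) =
            Submodule.Quotient.mk (s ⊗ₜ[ℤ] d n c)) ∧
      Function.Surjective (D 0) ∧
      LinearMap.ker (D 0) ≤ LinearMap.range (D 1) :=
  ⟨fun n => BaseChange.map ρ (d n), fun _ _ _ => rfl, BaseChange.map_surjective ρ hH0,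
    BaseChange.ker_map_le_range_map ρ hH0 hH1⟩

/-- Let `R`, `S` be rings and `ρ : R → S` a ring homomorphism,
so that `S` is an `(S,R)`-bimodule via `ρ`.  Let `C` be a non-negatively
indexed chain complex of free left `R`-modules (`∂_n = d (n-1) : C n → C (n-1)`)
with `H₀(C) = 0` (i.e. `∂₁` surjective) and `H₁(C) = 0`
(i.e. `ker ∂₁ ⊆ im ∂₂`).  Then the base-changed chain complex `S ⊗_R C` of left
`S`-modules, with differentials `D n = id_S ⊗ d n`, satisfies
`H₀(S ⊗_R C) = 0` and `H₁(S ⊗_R C) = 0`. -/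
theorem statement4 {R S : Type} [Ring R] [Ring S] (ρ : R →+* S)
    (C : ℕ → Type) [∀ n, AddCommGroup (C n)] [∀ n, Module R (C n)]
    [∀ n, Module.Free R (C n)]
    (d : ∀ n, C (n + 1) →ₗ[R] C n)
    (hdd : ∀ n, (d n).comp (d (n + 1)) = 0)
    (hH0 : Function.Surjective (d 0))
    (hH1 : LinearMap.ker (d 0) ≤ LinearMap.range (d 1)) :
    ∃ D : ∀ n, ((S ⊗[ℤ] C (n + 1)) ⧸ baseChangeRel ρ (C (n + 1))) →ₗ[S]
        ((S ⊗[ℤ] C n) ⧸ baseChangeRel ρ (C n)),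
      (∀ (n : ℕ) (s : S) (c : C (n + 1)),
          D n (Submodule.Quotient.mk (s ⊗ₜ[ℤ] c)) =
            Submodule.Quotient.mk (s ⊗ₜ[ℤ] d n c)) ∧
      Function.Surjective (D 0) ∧
      LinearMap.ker (D 0) ≤ LinearMap.range (D 1) :=
  statement4_general ρ C d hH0 hH1
end

section
/- Let R be a commutative integral domain with field of fractions F, and let f : M → N be a surjective homomorphism of R-modules such that the induced F-linear map id_F ⊗ f : F ⊗_R M → F ⊗_R N is injective. Then f maps the torsion submodule of M onto the torsion submodule of N: for every n ∈ N with r·n = 0 for some nonzero r ∈ R, there exists m ∈ M with s·m = 0 for some nonzero s ∈ R and f(m) = n. -/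
open TensorProduct

theorem LinearMap.ker_le_torsion'_of_injective_lTensor {R A M N : Type*} [CommSemiring R]
    [CommSemiring A] [Algebra R A] (S : Submonoid R) [IsLocalization S A]
    [AddCommMonoid M] [AddCommMonoid N] [Module R M] [Module R N]
    (f : M →ₗ[R] N) (hf : Function.Injective (f.lTensor A)) :
    LinearMap.ker f ≤ Submodule.torsion' R M S := by
  intro m hm
  have hm' : TensorProduct.mk R A M 1 m = 0 :=
    hf (by simpa using congrArg ((1 : A) ⊗ₜ[R] ·) (LinearMap.mem_ker.mp hm))
  -- `M → A ⊗[R] M` is a localization at `S`, so its kernel is the `S`-torsion.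
  exact (IsLocalizedModule.eq_zero_iff S _).mp hm'

theorem Submodule.map_torsion'_of_surjective_of_ker_le {R M N : Type*} [CommSemiring R]
    [AddCommMonoid M] [AddCommMonoid N] [Module R M] [Module R N] (S : Submonoid R)
    (f : M →ₗ[R] N) (hsurj : Function.Surjective f)
    (hker : LinearMap.ker f ≤ Submodule.torsion' R M S) :
    (Submodule.torsion' R M S).map f = Submodule.torsion' R N S := by
  refine le_antisymm ?_ fun n ⟨a, ha⟩ ↦ ?_
  · rintro _ ⟨m, ⟨a, ha⟩, rfl⟩
    exact ⟨a, by rw [← LinearMap.map_smul_of_tower, ha, map_zero]⟩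
  · obtain ⟨m, rfl⟩ := hsurj n
    obtain ⟨b, hb⟩ := hker (show a • m ∈ LinearMap.ker f by
      rw [LinearMap.mem_ker, LinearMap.map_smul_of_tower, ha])
    exact ⟨m, ⟨b * a, by rwa [mul_smul]⟩, rfl⟩

/-- Let `R` be a commutative integral domain with field of
fractions `F`, and let `f : M → N` be a surjective homomorphism of `R`-modules
such that the induced map `id_F ⊗ f : F ⊗_R M → F ⊗_R N` is injective.  Then
`f` maps the torsion submodule of `M` onto the torsion submodule of `N`:
for every `n ∈ N` with `r • n = 0` for some nonzero `r ∈ R`, there is `m ∈ M`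
with `s • m = 0` for some nonzero `s ∈ R` and `f m = n`. -/
theorem statement5 {R : Type} [CommRing R] [IsDomain R]
    {M N : Type} [AddCommGroup M] [AddCommGroup N] [Module R M] [Module R N]
    (f : M →ₗ[R] N) (hsurj : Function.Surjective f)
    (hinj : Function.Injective (f.lTensor (FractionRing R))) :
    ∀ n : N, (∃ r : R, r ≠ 0 ∧ r • n = 0) →
      ∃ m : M, (∃ s : R, s ≠ 0 ∧ s • m = 0) ∧ f m = n := by
  rintro n ⟨r, hr, hrn⟩
  have hn : n ∈ Submodule.torsion R N := ⟨⟨r, mem_nonZeroDivisors_of_ne_zero hr⟩, hrn⟩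
  rw [Submodule.torsion, ← Submodule.map_torsion'_of_surjective_of_ker_le _ f hsurj
    (f.ker_le_torsion'_of_injective_lTensor _ hinj)] at hn
  obtain ⟨m, ⟨s, hs⟩, rfl⟩ := hn
  exact ⟨m, ⟨s, nonZeroDivisors.ne_zero s.2, hs⟩, rfl⟩
end

section
/- Let R be a commutative integral domain and let C₃ →^{∂₃} C₂ →^{∂₂} C₁ →^{∂₁} C₀ be part of a chain complex of free R-modules (so ∂₁∘∂₂ = 0 and ∂₂∘∂₃ = 0). Suppose H₀ = C₀/im(∂₁) = 0, H₁ = ker(∂₁)/im(∂₂) = 0, and H₂ = ker(∂₂)/im(∂₃) is a torsion R-module. Then the second cohomology of the dual cochain complex Hom_R(C_*, R) vanishes: every R-linear map f : C₂ → R with f ∘ ∂₃ = 0 equals g ∘ ∂₂ for some R-linear map g : C₁ → R. -/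
/-!
A cocycle `f : C₂ → R` kills `im ∂₃`; since `H₂` is torsion and `R` is torsion-free, it then kills
all of `ker ∂₂`, so it factors through `im ∂₂ = ker ∂₁`. Because `C₀` is free, `∂₁` splits, making
`ker ∂₁` a direct summand of `C₁`, and the factored map extends to `g : C₁ → R`.
-/

open LinearMap

section

variable {R M N P : Type*} [CommRing R]
  [AddCommGroup M] [AddCommGroup N] [AddCommGroup P] [Module R M] [Module R N] [Module R P]

theorem Submodule.le_ker_of_exists_smul_mem [IsDomain R] [Module.IsTorsionFree R N]
    {K L : Submodule R M} (f : M →ₗ[R] N) (hL : L ≤ ker f)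
    (hK : ∀ x ∈ K, ∃ r : R, r ≠ 0 ∧ r • x ∈ L) : K ≤ ker f := by
  intro x hx
  obtain ⟨r, hr, hrx⟩ := hK x hx
  have hfrx : r • f x = 0 := by simpa using hL hrx
  exact (smul_eq_zero.mp hfrx).resolve_left hr

theorem LinearMap.exists_eq_comp_rangeRestrict_of_ker_le (d : M →ₗ[R] P) (f : M →ₗ[R] N)
    (hf : ker d ≤ ker f) : ∃ h : range d →ₗ[R] N, f = h ∘ₗ d.rangeRestrict :=
  ⟨(ker d).liftQ f hf ∘ₗ d.quotKerEquivRange.symm.toLinearMap, by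
    ext x
    have hx : d.rangeRestrict x = ⟨d x, mem_range_self d x⟩ := rfl
    simp [hx]⟩

theorem LinearMap.exists_comp_subtype_eq_of_surjective [Module.Projective R P] (d : M →ₗ[R] P)
    (hd : Function.Surjective d) {K : Submodule R M} (hK : K = ker d) (h : K →ₗ[R] N) :
    ∃ g : M →ₗ[R] N, g ∘ₗ K.subtype = h := by
  subst hK
  obtain ⟨s, hs⟩ := Module.projective_lifting_property d LinearMap.id hd
  have hds (x : M) : d (s (d x)) = d x := LinearMap.congr_fun hs (d x)
  let π : M →ₗ[R] ker d := codRestrict _ (LinearMap.id - s ∘ₗ d) fun x => by simp [hds]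
  refine ⟨h ∘ₗ π, ?_⟩
  ext ⟨x, hx⟩
  have hπx : π x = ⟨x, hx⟩ := Subtype.ext (by simp [π, mem_ker.mp hx])
  simp [hπx]

end

theorem statement7_general {R : Type} [CommRing R] [IsDomain R]
    {C₃ C₂ C₁ C₀ : Type}
    [AddCommGroup C₃] [AddCommGroup C₂] [AddCommGroup C₁] [AddCommGroup C₀]
    [Module R C₃] [Module R C₂] [Module R C₁] [Module R C₀]
    [Module.Free R C₀]
    (d₃ : C₃ →ₗ[R] C₂) (d₂ : C₂ →ₗ[R] C₁) (d₁ : C₁ →ₗ[R] C₀)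
    (h12 : d₁.comp d₂ = 0)
    (hH0 : Function.Surjective d₁)
    (hH1 : LinearMap.ker d₁ ≤ LinearMap.range d₂)
    (hH2 : ∀ x ∈ LinearMap.ker d₂, ∃ r : R, r ≠ 0 ∧ r • x ∈ LinearMap.range d₃) :
    ∀ f : C₂ →ₗ[R] R, f.comp d₃ = 0 → ∃ g : C₁ →ₗ[R] R, f = g.comp d₂ := by
  intro f hf
  have hker : ker d₂ ≤ ker f :=
    Submodule.le_ker_of_exists_smul_mem f (range_le_ker_iff.mpr hf) hH2
  obtain ⟨h, rfl⟩ := d₂.exists_eq_comp_rangeRestrict_of_ker_le f hker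
  have hexact : range d₂ = ker d₁ := le_antisymm (range_le_ker_iff.mpr h12) hH1
  obtain ⟨g, hg⟩ := d₁.exists_comp_subtype_eq_of_surjective hH0 hexact h
  exact ⟨g, by rw [← hg]; rfl⟩

/-- Let `R` be a commutative integral domain and let
`C₃ →^{∂₃} C₂ →^{∂₂} C₁ →^{∂₁} C₀` be part of a chain complex of free
`R`-modules.  Suppose `H₀ = C₀/im ∂₁ = 0`, `H₁ = ker ∂₁ / im ∂₂ = 0`, and
`H₂ = ker ∂₂ / im ∂₃` is a torsion `R`-module.  Then the second cohomology of
the dual cochain complex `Hom_R(C_*, R)` vanishes: every `R`-linear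
`f : C₂ → R` with `f ∘ ∂₃ = 0` equals `g ∘ ∂₂` for some `R`-linear
`g : C₁ → R`. -/
theorem statement7 {R : Type} [CommRing R] [IsDomain R]
    {C₃ C₂ C₁ C₀ : Type}
    [AddCommGroup C₃] [AddCommGroup C₂] [AddCommGroup C₁] [AddCommGroup C₀]
    [Module R C₃] [Module R C₂] [Module R C₁] [Module R C₀]
    [Module.Free R C₃] [Module.Free R C₂] [Module.Free R C₁] [Module.Free R C₀]
    (d₃ : C₃ →ₗ[R] C₂) (d₂ : C₂ →ₗ[R] C₁) (d₁ : C₁ →ₗ[R] C₀)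
    (h12 : d₁.comp d₂ = 0) (h23 : d₂.comp d₃ = 0)
    (hH0 : Function.Surjective d₁)
    (hH1 : LinearMap.ker d₁ ≤ LinearMap.range d₂)
    (hH2 : ∀ x ∈ LinearMap.ker d₂, ∃ r : R, r ≠ 0 ∧ r • x ∈ LinearMap.range d₃) :
    ∀ f : C₂ →ₗ[R] R, f.comp d₃ = 0 → ∃ g : C₁ →ₗ[R] R, f = g.comp d₂ :=
  statement7_general d₃ d₂ d₁ h12 hH0 hH1 hH2
end
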